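/- Let G : [0,1] → ℝ and τ* ∈ (0,1], and assume G is differentiable at τ* with derivative g(τ*). Let T be a map from functions [0,1] → ℝ to [0,1] with T(G) = τ*, Hadamard-differentiable at G tangentially to continuous functions with derivative Ṫ: for every continuous H : [0,1] → ℝ and every family (H_t)_{t>0} of cadlag functions with ‖H_t − H‖_∞ → 0 as t → 0⁺, one has (T(G + t·H_t) − T(G))/t → Ṫ(H). Define R(F) = F(T(F)). Then for every such continuous H and every such family (H_t), (R(G + t·H_t) − R(G))/t → H(τ*) + g(τ*)·Ṫ(H) as t → 0⁺. -/

import Mathlib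

open Filter Set

/-- A cadlag function on `[0,1]`: right-continuous on `[0,1)` and with left limits
at every point of `(0,1]`. -/
def Cadlag (f : ℝ → ℝ) : Prop :=
  (∀ x ∈ Set.Ico (0:ℝ) 1, ContinuousWithinAt f (Set.Ici x) x) ∧
  (∀ x ∈ Set.Ioc (0:ℝ) 1, ∃ l, Filter.Tendsto f (nhdsWithin x (Set.Iio x)) (nhds l))

/-- Convergence in sup norm on `[0,1]` as `t → 0⁺`. -/
def SupConv (Ht : ℝ → ℝ → ℝ) (H : ℝ → ℝ) : Prop :=
  ∀ ε > (0:ℝ), ∀ᶠ t in nhdsWithin (0:ℝ) (Set.Ioi 0),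
    ∀ x ∈ Set.Icc (0:ℝ) 1, |Ht t x - H x| ≤ ε

/-!
The perturbed threshold `τ t = T(G + t Hₜ)` satisfies `(τ t - τ*)/t → Ṫ(H)`, so in particular
`τ t → τ*`. Writing
`(R(G + t Hₜ) - R(G))/t = (G(τ t) - G(τ*))/t + Hₜ(τ t)`,
the first term tends to `g(τ*) Ṫ(H)` by the chain rule along the curve `τ`, and the second to
`H(τ*)` by uniform convergence of `Hₜ` to `H` together with continuity of `H` at `τ*`.
-/

open scoped Topology

lemma tendsto_of_tendsto_sub_div {f : ℝ → ℝ} {a L : ℝ}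
    (h : Tendsto (fun t => (f t - a) / t) (𝓝[>] 0) (𝓝 L)) :
    Tendsto f (𝓝[>] 0) (𝓝 a) := by
  have hprod : Tendsto (fun t => t * ((f t - a) / t) + a) (𝓝[>] 0) (𝓝 (0 * L + a)) :=
    (tendsto_nhdsWithin_of_tendsto_nhds tendsto_id |>.mul h).add tendsto_const_nhds
  rw [zero_mul, zero_add] at hprod
  refine hprod.congr' ?_
  filter_upwards [self_mem_nhdsWithin] with t (ht : 0 < t)
  field_simp
  ring

lemma HasDerivWithinAt.tendsto_sub_div_comp {G : ℝ → ℝ} {g a L : ℝ} {s : Set ℝ} {f : ℝ → ℝ}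
    (hG : HasDerivWithinAt G g s a) (hfs : ∀ᶠ t in 𝓝[>] 0, f t ∈ s)
    (hf : Tendsto (fun t => (f t - a) / t) (𝓝[>] 0) (𝓝 L)) :
    Tendsto (fun t => (G (f t) - G a) / t) (𝓝[>] 0) (𝓝 (g * L)) := by
  have hd : Tendsto (fun t => f t - a) (𝓝[>] 0) (𝓝 0) := by
    simpa using (tendsto_of_tendsto_sub_div hf).sub_const a
  have hlim := hG.hasFDerivWithinAt.lim (c := fun t => t⁻¹) hd
    (by simpa using hfs) (by simpa [div_eq_inv_mul] using hf)
  simpa [div_eq_inv_mul, mul_comm] using hlim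

lemma SupConv.tendsto_comp {Ht : ℝ → ℝ → ℝ} {H : ℝ → ℝ} {f : ℝ → ℝ} {a : ℝ}
    (hsup : SupConv Ht H) (hH : ContinuousWithinAt H (Icc 0 1) a)
    (hf : Tendsto f (𝓝[>] 0) (𝓝[Icc 0 1] a)) :
    Tendsto (fun t => Ht t (f t)) (𝓝[>] 0) (𝓝 (H a)) := by
  rw [Metric.tendsto_nhds]
  intro ε hε
  have hHf := Metric.tendsto_nhds.mp (hH.tendsto.comp hf) (ε / 2) (half_pos hε)
  filter_upwards [hsup (ε / 2) (half_pos hε), hHf, hf self_mem_nhdsWithin]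
    with t hunif hcont hmem
  rw [Function.comp_apply, Real.dist_eq] at hcont
  rw [Real.dist_eq]
  calc |Ht t (f t) - H a| ≤ |Ht t (f t) - H (f t)| + |H (f t) - H a| := abs_sub_le _ _ _
    _ < ε := by linarith [hunif (f t) hmem]

theorem stmt_8_general (G : ℝ → ℝ) (τs g : ℝ) (T : (ℝ → ℝ) → ℝ) (Tdot : (ℝ → ℝ) → ℝ)
    (hTG : T G = τs)
    (hg : HasDerivWithinAt G g (Set.Icc 0 1) τs)
    (hTrange : ∀ F : ℝ → ℝ, T F ∈ Set.Icc (0:ℝ) 1)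
    (hHad : ∀ H : ℝ → ℝ, ContinuousOn H (Set.Icc 0 1) →
      ∀ Ht : ℝ → ℝ → ℝ, (∀ t ∈ Set.Ioi (0:ℝ), Cadlag (Ht t)) → SupConv Ht H →
      Filter.Tendsto (fun t => (T (fun x => G x + t * Ht t x) - T G) / t)
        (nhdsWithin (0:ℝ) (Set.Ioi 0)) (nhds (Tdot H))) :
    ∀ H : ℝ → ℝ, ContinuousOn H (Set.Icc 0 1) →
      ∀ Ht : ℝ → ℝ → ℝ, (∀ t ∈ Set.Ioi (0:ℝ), Cadlag (Ht t)) → SupConv Ht H →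
      Filter.Tendsto
        (fun t => ((fun x => G x + t * Ht t x) (T (fun x => G x + t * Ht t x))
            - G (T G)) / t)
        (nhdsWithin (0:ℝ) (Set.Ioi 0)) (nhds (H τs + g * Tdot H)) := by
  intro H hH Ht hcad hsup
  set τ : ℝ → ℝ := fun t => T (fun x => G x + t * Ht t x)
  have hτ : Tendsto (fun t => (τ t - τs) / t) (𝓝[>] 0) (𝓝 (Tdot H)) := by
    simpa only [hTG] using hHad H hH Ht hcad hsup
  have hτ_within : Tendsto τ (𝓝[>] 0) (𝓝[Icc 0 1] τs) :=
    tendsto_nhdsWithin_of_tendsto_nhds_of_eventually_within _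
      (tendsto_of_tendsto_sub_div hτ) (Eventually.of_forall fun _ => hTrange _)
  have hGτ := hg.tendsto_sub_div_comp (Eventually.of_forall fun _ => hTrange _) hτ
  have hHtτ := hsup.tendsto_comp (hH τs (hTG ▸ hTrange G)) hτ_within
  rw [hTG, add_comm]
  refine (hGτ.add hHtτ).congr' ?_
  filter_upwards [self_mem_nhdsWithin] with t (ht : 0 < t)
  field_simp
  ring

/-- Hadamard differentiability of the proportion-of-rejections map
`R(F) = F(T(F))` at `G`, with derivative `H ↦ H(τ*) + g(τ*)·Ṫ(H)`. -/
theorem stmt_8 (G : ℝ → ℝ) (τs g : ℝ) (T : (ℝ → ℝ) → ℝ) (Tdot : (ℝ → ℝ) → ℝ)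
    (hτs : τs ∈ Set.Ioc (0:ℝ) 1)
    (hTG : T G = τs)
    (hg : HasDerivWithinAt G g (Set.Icc 0 1) τs)
    (hTrange : ∀ F : ℝ → ℝ, T F ∈ Set.Icc (0:ℝ) 1)
    (hHad : ∀ H : ℝ → ℝ, ContinuousOn H (Set.Icc 0 1) →
      ∀ Ht : ℝ → ℝ → ℝ, (∀ t ∈ Set.Ioi (0:ℝ), Cadlag (Ht t)) → SupConv Ht H →
      Filter.Tendsto (fun t => (T (fun x => G x + t * Ht t x) - T G) / t)
        (nhdsWithin (0:ℝ) (Set.Ioi 0)) (nhds (Tdot H))) :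
    ∀ H : ℝ → ℝ, ContinuousOn H (Set.Icc 0 1) →
      ∀ Ht : ℝ → ℝ → ℝ, (∀ t ∈ Set.Ioi (0:ℝ), Cadlag (Ht t)) → SupConv Ht H →
      Filter.Tendsto
        (fun t => ((fun x => G x + t * Ht t x) (T (fun x => G x + t * Ht t x))
            - G (T G)) / t)
        (nhdsWithin (0:ℝ) (Set.Ioi 0)) (nhds (H τs + g * Tdot H)) :=
  stmt_8_general G τs g T Tdot hTG hg hTrange hHad
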